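/- arXiv:1506.08423 — 3 statements merged into one kernel-verified Lean document; each statement's English description precedes it below -/
import Mathlib

section
/- Let σ > 0, a < b real, k ∈ ℂ, T > 0, and let u : [a,b] × [0,T] → ℝ be a smooth solution of u_t = σ² u_xx. Then 0 = ∫_a^b e^{-ikx} u(x,0) dx − ∫_a^b e^{-ikx + σ²k²T} u(x,T) dx + ∫_0^T σ² e^{-ikb + σ²k²s}(u_x(b,s) + ik u(b,s)) ds − ∫_0^T σ² e^{-ika + σ²k²s}(u_x(a,s) + ik u(a,s)) ds. -/
open Complex intervalIntegral MeasureTheory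

theorem swap_aux' {a b c d : ℝ} (hab : a ≤ b) (hcd : c ≤ d) (f : ℝ → ℝ → ℂ)
    (hf : Continuous (fun p : ℝ × ℝ => f p.1 p.2)) :
    ∫ x in a..b, ∫ t in c..d, f x t = ∫ t in c..d, ∫ x in a..b, f x t := by
  rw [integral_of_le hab, integral_of_le hcd]
  simp_rw [integral_of_le hab, integral_of_le hcd]
  apply MeasureTheory.integral_integral_swap
  rw [show Function.uncurry f = fun p : ℝ × ℝ => f p.1 p.2 from rfl, Measure.prod_restrict]
  have h1 : IntegrableOn (fun p : ℝ × ℝ => f p.1 p.2) (Set.Icc a b ×ˢ Set.Icc c d)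
      (volume.prod volume) :=
    hf.continuousOn.integrableOn_compact (isCompact_Icc.prod isCompact_Icc)
  exact h1.mono_set (Set.prod_mono Set.Ioc_subset_Icc_self Set.Ioc_subset_Icc_self)

theorem partial_x {f : ℝ × ℝ → ℝ} (hf : ContDiff ℝ (⊤ : ℕ∞) f) (x t : ℝ) :
    HasDerivAt (fun ξ => f (ξ, t)) (fderiv ℝ f (x, t) (1, 0)) x :=
  ((hf.differentiable (by simp) (x, t)).hasFDerivAt).comp_hasDerivAt x
    ((hasDerivAt_id x).prodMk (hasDerivAt_const x t))

set_option maxHeartbeats 1000000 in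
/-- Global relation for the heat equation `u_t = σ² u_xx` on the interval `[a,b]`,
obtained by integrating the local relation over `[a,b] × [0,T]`. -/
theorem global_relation_heat_finite
    (σ : ℝ) (hσ : 0 < σ) (a b : ℝ) (hab : a < b) (T : ℝ) (hT : 0 < T)
    (k : ℂ)
    (u : ℝ → ℝ → ℝ)
    (hu : ContDiff ℝ (⊤ : ℕ∞) (fun p : ℝ × ℝ => u p.1 p.2))
    (heat : ∀ x t, deriv (fun τ => u x τ) t
      = σ ^ 2 * deriv (fun ξ => deriv (fun ξ' => u ξ' t) ξ) x) :
    (0 : ℂ) =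
      (∫ x in a..b, Complex.exp (-I * k * (x : ℂ)) * (u x 0 : ℂ))
      - (∫ x in a..b,
          Complex.exp (-I * k * (x : ℂ) + (σ : ℂ) ^ 2 * k ^ 2 * (T : ℂ)) * (u x T : ℂ))
      + (∫ s in (0:ℝ)..T,
          (σ : ℂ) ^ 2 * Complex.exp (-I * k * (b : ℂ) + (σ : ℂ) ^ 2 * k ^ 2 * (s : ℂ)) *
            ((deriv (fun ξ => u ξ s) b : ℂ) + I * k * (u b s : ℂ)))
      - (∫ s in (0:ℝ)..T,
          (σ : ℂ) ^ 2 * Complex.exp (-I * k * (a : ℂ) + (σ : ℂ) ^ 2 * k ^ 2 * (s : ℂ)) *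
            ((deriv (fun ξ => u ξ s) a : ℂ) + I * k * (u a s : ℂ))) := by
  set c : ℂ := (σ : ℂ) ^ 2 * k ^ 2 with hc
  set V : ℝ × ℝ → ℝ := fun p => fderiv ℝ (fun p : ℝ × ℝ => u p.1 p.2) p (1, 0) with hVdef
  have hV : ContDiff ℝ (⊤ : ℕ∞) V := (hu.fderiv_right (by simp)).clm_apply contDiff_const
  set W : ℝ × ℝ → ℝ := fun p => fderiv ℝ V p (1, 0) with hWdef
  have hW : ContDiff ℝ (⊤ : ℕ∞) W := (hV.fderiv_right (by simp)).clm_apply contDiff_const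
  -- first partial derivative in x
  have hVx : ∀ x t, HasDerivAt (fun ξ => u ξ t) (V (x, t)) x := fun x t => partial_x hu x t
  have hux : ∀ x t, deriv (fun ξ => u ξ t) x = V (x, t) := fun x t => (hVx x t).deriv
  -- second partial derivative in x
  have hWx : ∀ x t, HasDerivAt (fun ξ => V (ξ, t)) (W (x, t)) x := fun x t => partial_x hV x t
  have huxx : ∀ x t, deriv (fun ξ => deriv (fun ξ' => u ξ' t) ξ) x = W (x, t) := by
    intro x t
    have : (fun ξ => deriv (fun ξ' => u ξ' t) ξ) = fun ξ => V (ξ, t) :=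
      funext fun ξ => hux ξ t
    rw [this]; exact (hWx x t).deriv
  -- time derivative via the heat equation
  have hut : ∀ x t, HasDerivAt (fun τ => u x τ) (σ ^ 2 * W (x, t)) t := by
    intro x t
    have h : HasDerivAt (fun τ => u x τ) (fderiv ℝ (fun p : ℝ × ℝ => u p.1 p.2) (x, t) (0, 1)) t :=
      ((hu.differentiable (by simp) (x, t)).hasFDerivAt).comp_hasDerivAt t
        ((hasDerivAt_const t x).prodMk (hasDerivAt_id t))
    have h2 := h.differentiableAt.hasDerivAt
    rw [heat x t, huxx x t] at h2
    exact h2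
  -- the integrand H of the double integral
  obtain ⟨H, hHdef⟩ : ∃ H : ℝ → ℝ → ℂ, H = fun (x t : ℝ) =>
      Complex.exp (-I * k * (x : ℂ) + c * (t : ℂ)) *
        (c * (u x t : ℂ) + (σ : ℂ) ^ 2 * (W (x, t) : ℂ)) := ⟨_, rfl⟩
  have hHcont : Continuous (fun p : ℝ × ℝ => H p.1 p.2) := by
    rw [hHdef]
    apply Continuous.mul
    · exact Complex.continuous_exp.comp (by continuity)
    · apply Continuous.add
      · exact continuous_const.mul (Complex.continuous_ofReal.comp hu.continuous)
      · exact continuous_const.mul (Complex.continuous_ofReal.comp hW.continuous)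
  -- derivative in t of F(x, t) = exp(-ikx + ct) u(x,t)
  have hFt : ∀ (x t : ℝ), HasDerivAt
      (fun τ : ℝ => Complex.exp (-I * k * (x : ℂ) + c * (τ : ℂ)) * (u x τ : ℂ)) (H x t) t := by
    intro x t
    have h0 : HasDerivAt (fun τ : ℝ => ((τ : ℝ) : ℂ)) 1 t := by
      simpa using (hasDerivAt_id t).ofReal_comp
    have h1 : HasDerivAt (fun τ : ℝ => -I * k * (x : ℂ) + c * (τ : ℂ)) c t := by
      simpa using (h0.const_mul c).const_add (-I * k * (x : ℂ))
    have h2 := h1.cexp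
    have h3 := (hut x t).ofReal_comp
    have h4 := h2.mul h3
    refine h4.congr_deriv ?_
    rw [hHdef]
    push_cast
    ring
  -- derivative in x of G(x, t) = σ² exp(-ikx + ct)(u_x + iku)
  have hGx : ∀ (x t : ℝ), HasDerivAt
      (fun ξ : ℝ => (σ : ℂ) ^ 2 * Complex.exp (-I * k * (ξ : ℂ) + c * (t : ℂ)) *
        ((V (ξ, t) : ℂ) + I * k * (u ξ t : ℂ))) (H x t) x := by
    intro x t
    have h0 : HasDerivAt (fun ξ : ℝ => ((ξ : ℝ) : ℂ)) 1 x := by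
      simpa using (hasDerivAt_id x).ofReal_comp
    have h1 : HasDerivAt (fun ξ : ℝ => -I * k * (ξ : ℂ) + c * (t : ℂ)) (-I * k) x := by
      simpa using ((h0.const_mul (-I * k)).add_const (c * (t : ℂ)))
    have h2 := h1.cexp
    have h3 : HasDerivAt (fun ξ : ℝ => (V (ξ, t) : ℂ) + I * k * (u ξ t : ℂ))
        ((W (x, t) : ℂ) + I * k * (V (x, t) : ℂ)) x :=
      ((hWx x t).ofReal_comp).add (((hVx x t).ofReal_comp).const_mul (I * k))
    have h4 := (h2.mul h3).const_mul ((σ : ℂ) ^ 2)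
    have h5 : HasDerivAt
        (fun ξ : ℝ => (σ : ℂ) ^ 2 * (Complex.exp (-I * k * (ξ : ℂ) + c * (t : ℂ)) *
          ((V (ξ, t) : ℂ) + I * k * (u ξ t : ℂ)))) (H x t) x := by
      refine h4.congr_deriv ?_
      rw [hHdef]
      have hI : (I : ℂ) * I = -1 := Complex.I_mul_I
      push_cast
      ring_nf
      rw [Complex.I_sq]
      ring
    simpa [mul_assoc] using h5
  -- FTC in t : for each x, ∫_0^T H(x,t) dt = F(x,T) - F(x,0)
  have hcontH1 : ∀ x : ℝ, Continuous (fun t : ℝ => H x t) := fun x =>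
    hHcont.comp (Continuous.prodMk_right x)
  have hcontH2 : ∀ t : ℝ, Continuous (fun x : ℝ => H x t) := fun t =>
    hHcont.comp (Continuous.prodMk_left t)
  have ftc_t : ∀ x : ℝ, (∫ t in (0:ℝ)..T, H x t) =
      Complex.exp (-I * k * (x : ℂ) + c * (T : ℂ)) * (u x T : ℂ)
      - Complex.exp (-I * k * (x : ℂ) + c * ((0:ℝ) : ℂ)) * (u x 0 : ℂ) := by
    intro x
    exact intervalIntegral.integral_eq_sub_of_hasDerivAt
      (fun t _ => hFt x t) ((hcontH1 x).intervalIntegrable 0 T)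
  have ftc_x : ∀ t : ℝ, (∫ x in a..b, H x t) =
      (σ : ℂ) ^ 2 * Complex.exp (-I * k * (b : ℂ) + c * (t : ℂ)) *
        ((V (b, t) : ℂ) + I * k * (u b t : ℂ))
      - (σ : ℂ) ^ 2 * Complex.exp (-I * k * (a : ℂ) + c * (t : ℂ)) *
        ((V (a, t) : ℂ) + I * k * (u a t : ℂ)) := by
    intro t
    exact intervalIntegral.integral_eq_sub_of_hasDerivAt
      (fun x _ => hGx x t) ((hcontH2 t).intervalIntegrable a b)
  -- Fubini
  have swap : (∫ x in a..b, ∫ t in (0:ℝ)..T, H x t) = ∫ t in (0:ℝ)..T, ∫ x in a..b, H x t :=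
    swap_aux' hab.le hT.le H hHcont
  -- rewrite the four integrals in the statement
  have hux' : ∀ x t : ℝ, deriv (fun ξ : ℝ => ((u ξ t : ℝ) : ℂ)) x = ((V (x, t) : ℝ) : ℂ) :=
    fun x t => ((hVx x t).ofReal_comp).deriv
  simp only [hux']
  have e1 : (∫ x in a..b, Complex.exp (-I * k * (x : ℂ)) * (u x 0 : ℂ))
      = ∫ x in a..b, Complex.exp (-I * k * (x : ℂ) + c * ((0:ℝ) : ℂ)) * (u x 0 : ℂ) := by
    simp
  rw [e1]
  -- put everything together
  have key : (∫ x in a..b,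
        (Complex.exp (-I * k * (x : ℂ) + c * (T : ℂ)) * (u x T : ℂ)
        - Complex.exp (-I * k * (x : ℂ) + c * ((0:ℝ) : ℂ)) * (u x 0 : ℂ)))
      = ∫ t in (0:ℝ)..T,
        ((σ : ℂ) ^ 2 * Complex.exp (-I * k * (b : ℂ) + c * (t : ℂ)) *
          ((V (b, t) : ℂ) + I * k * (u b t : ℂ))
        - (σ : ℂ) ^ 2 * Complex.exp (-I * k * (a : ℂ) + c * (t : ℂ)) *
          ((V (a, t) : ℂ) + I * k * (u a t : ℂ))) := by
    calc (∫ x in a..b,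
        (Complex.exp (-I * k * (x : ℂ) + c * (T : ℂ)) * (u x T : ℂ)
        - Complex.exp (-I * k * (x : ℂ) + c * ((0:ℝ) : ℂ)) * (u x 0 : ℂ)))
        = ∫ x in a..b, ∫ t in (0:ℝ)..T, H x t := by
          apply intervalIntegral.integral_congr
          intro x _
          exact (ftc_t x).symm
      _ = ∫ t in (0:ℝ)..T, ∫ x in a..b, H x t := swap
      _ = _ := by
          apply intervalIntegral.integral_congr
          intro t _
          exact ftc_x t
  -- split the integrals of differences
  have hcUx : ∀ t0 : ℝ, Continuous fun x : ℝ => u x t0 := fun t0 =>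
    hu.continuous.comp (continuous_id.prodMk continuous_const)
  have hcUt : ∀ x0 : ℝ, Continuous fun t : ℝ => u x0 t := fun x0 =>
    hu.continuous.comp (continuous_const.prodMk continuous_id)
  have hcVt : ∀ x0 : ℝ, Continuous fun t : ℝ => V (x0, t) := fun x0 =>
    hV.continuous.comp (continuous_const.prodMk continuous_id)
  have hlin1 : ∀ t0 : ℝ, Continuous fun x : ℝ => -I * k * (x : ℂ) + c * ((t0 : ℝ) : ℂ) :=
    fun t0 => (continuous_const.mul continuous_ofReal : Continuous fun x : ℝ => -I * k * (x : ℂ)).add continuous_const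
  have hlin2 : ∀ x0 : ℝ, Continuous fun t : ℝ => -I * k * ((x0 : ℝ) : ℂ) + c * (t : ℂ) :=
    fun x0 => continuous_const.add (continuous_const.mul continuous_ofReal : Continuous fun t : ℝ => c * (t : ℂ))
  have int1 : IntervalIntegrable
      (fun x => Complex.exp (-I * k * (x : ℂ) + c * (T : ℂ)) * (u x T : ℂ)) volume a b :=
    ((Complex.continuous_exp.comp (hlin1 T)).mul
      (Complex.continuous_ofReal.comp (hcUx T))).intervalIntegrable a b
  have int2 : IntervalIntegrable
      (fun x => Complex.exp (-I * k * (x : ℂ) + c * ((0:ℝ) : ℂ)) * (u x 0 : ℂ)) volume a b :=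
    ((Complex.continuous_exp.comp (hlin1 0)).mul
      (Complex.continuous_ofReal.comp (hcUx 0))).intervalIntegrable a b
  have int3 : IntervalIntegrable
      (fun t => (σ : ℂ) ^ 2 * Complex.exp (-I * k * (b : ℂ) + c * (t : ℂ)) *
        ((V (b, t) : ℂ) + I * k * (u b t : ℂ))) volume 0 T :=
    (((continuous_const.mul (Complex.continuous_exp.comp (hlin2 b))).mul
      ((Complex.continuous_ofReal.comp (hcVt b)).add
        (continuous_const.mul (Complex.continuous_ofReal.comp (hcUt b))))).intervalIntegrable 0 T)
  have int4 : IntervalIntegrable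
      (fun t => (σ : ℂ) ^ 2 * Complex.exp (-I * k * (a : ℂ) + c * (t : ℂ)) *
        ((V (a, t) : ℂ) + I * k * (u a t : ℂ))) volume 0 T :=
    (((continuous_const.mul (Complex.continuous_exp.comp (hlin2 a))).mul
      ((Complex.continuous_ofReal.comp (hcVt a)).add
        (continuous_const.mul (Complex.continuous_ofReal.comp (hcUt a))))).intervalIntegrable 0 T)
  rw [intervalIntegral.integral_sub int1 int2, intervalIntegral.integral_sub int3 int4] at key
  linear_combination key
end

section
/- Let σ > 0, k ∈ ℂ with Im(k) > 0, T > 0, and let u : (-∞,0] × [0,T] → ℝ be a smooth solution of u_t = σ² u_xx with u(x,t) → 0 and u_x(x,t) → 0 as x → −∞, sufficiently fast that all integrals below converge. Then 0 = ∫_{−∞}^0 e^{-ikx} u(x,0) dx − ∫_{−∞}^0 e^{-ikx + σ²k²T} u(x,T) dx + ∫_0^T σ² e^{σ²k²s}(u_x(0,s) + ik u(0,s)) ds. -/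
open Complex MeasureTheory intervalIntegral Set Filter Topology

set_option maxHeartbeats 1000000 in
lemma myIntegrableOn_exp_mul_Iic {c : ℝ} (hc : 0 < c) (b : ℝ) :
    IntegrableOn (fun x => Real.exp (c * x)) (Iic b) := by
  have h : IntegrableOn (fun x => Real.exp (-c * x)) (Ioi (-b)) :=
    exp_neg_integrableOn_Ioi (-b) hc
  have h2 : IntegrableOn (fun x => Real.exp (-c * (-x))) ((fun x : ℝ => -x) ⁻¹' (Ioi (-b))) :=
    (MeasurePreserving.integrableOn_comp_preimage (Measure.measurePreserving_neg _)
      (Homeomorph.neg ℝ).measurableEmbedding).2 h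
  have hs : ((fun x : ℝ => -x) ⁻¹' (Ioi (-b))) = Iio b := by ext x; simp
  rw [hs] at h2
  have h3 : IntegrableOn (fun x => Real.exp (c * x)) (Iio b) := by
    simpa [neg_mul, neg_neg, mul_comm] using h2
  exact (integrableOn_Iic_iff_integrableOn_Iio).2 h3

/-- partial derivative in the first variable -/
noncomputable def pd (u : ℝ → ℝ → ℝ) : ℝ → ℝ → ℝ := fun x t => deriv (fun ξ => u ξ t) x

lemma pd_contDiff {u : ℝ → ℝ → ℝ} (hu : ContDiff ℝ (⊤ : ℕ∞) (fun p : ℝ × ℝ => u p.1 p.2)) :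
    ContDiff ℝ (⊤ : ℕ∞) (fun p : ℝ × ℝ => pd u p.1 p.2) := by
  have h : ∀ p : ℝ × ℝ, pd u p.1 p.2 = fderiv ℝ (fun ξ => u ξ p.2) p.1 1 := by
    intro p; rw [pd, fderiv_apply_one_eq_deriv]
  simp_rw [h]
  exact ContDiff.fderiv_apply
    (f := fun (p : ℝ × ℝ) ξ => u ξ p.2) (g := fun p => p.1) (k := fun _ => 1)
    (hu.comp (contDiff_snd.prodMk (contDiff_fst.snd))) contDiff_fst contDiff_const (by simp)

lemma pd_hasDerivAt {u : ℝ → ℝ → ℝ} (hu : ContDiff ℝ (⊤ : ℕ∞) (fun p : ℝ × ℝ => u p.1 p.2))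
    (x t : ℝ) : HasDerivAt (fun ξ => u ξ t) (pd u x t) x := by
  have hdiff : DifferentiableAt ℝ (fun ξ => u ξ t) x :=
    ((hu.comp (contDiff_id.prodMk contDiff_const)).differentiable (by simp)).differentiableAt
  exact hdiff.hasDerivAt

lemma slice_cont₁ {u : ℝ → ℝ → ℝ} (hu : Continuous (fun p : ℝ × ℝ => u p.1 p.2)) (t : ℝ) :
    Continuous (fun x => u x t) := hu.comp (continuous_id.prodMk continuous_const)

lemma slice_cont₂ {u : ℝ → ℝ → ℝ} (hu : Continuous (fun p : ℝ × ℝ => u p.1 p.2)) (x : ℝ) :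
    Continuous (fun t => u x t) := hu.comp (continuous_const.prodMk continuous_id)

/-- Global relation for the heat equation on the half-line `(-∞,0]`, for `Im k > 0`.
The solution and its `x`-derivative are assumed to decay like `C e^{αx}` as `x → -∞`,
uniformly in `t`, which guarantees convergence of all the integrals. -/
theorem global_relation_heat_halfline
    (σ : ℝ) (hσ : 0 < σ) (T : ℝ) (hT : 0 < T)
    (k : ℂ) (hk : 0 < k.im)
    (u : ℝ → ℝ → ℝ)
    (hu : ContDiff ℝ (⊤ : ℕ∞) (fun p : ℝ × ℝ => u p.1 p.2))
    (heat : ∀ x t, deriv (fun τ => u x τ) t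
      = σ ^ 2 * deriv (fun ξ => deriv (fun ξ' => u ξ' t) ξ) x)
    (C α : ℝ) (hC : 0 < C) (hα : 0 < α)
    (hdecay : ∀ x t, x ≤ 0 → 0 ≤ t → t ≤ T →
      |u x t| ≤ C * Real.exp (α * x) ∧
      |deriv (fun ξ => u ξ t) x| ≤ C * Real.exp (α * x)) :
    (0 : ℂ) =
      (∫ x in Set.Iic (0:ℝ), Complex.exp (-I * k * (x : ℂ)) * (u x 0 : ℂ))
      - (∫ x in Set.Iic (0:ℝ),
          Complex.exp (-I * k * (x : ℂ) + (σ : ℂ) ^ 2 * k ^ 2 * (T : ℂ)) * (u x T : ℂ))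
      + (∫ s in (0:ℝ)..T,
          (σ : ℂ) ^ 2 * Complex.exp ((σ : ℂ) ^ 2 * k ^ 2 * (s : ℂ)) *
            ((deriv (fun ξ => u ξ s) 0 : ℂ) + I * k * (u 0 s : ℂ))) := by
  classical
  -- notation
  set e : ℝ → ℂ := fun x => Complex.exp (-I * k * (x : ℂ)) with he
  set Es : ℝ → ℂ := fun s => Complex.exp ((σ : ℂ) ^ 2 * k ^ 2 * (s : ℂ)) with hEs
  set ux : ℝ → ℝ → ℝ := pd u with hux_def
  set uxx : ℝ → ℝ → ℝ := pd (pd u) with huxx_def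
  have hux : ContDiff ℝ (⊤ : ℕ∞) (fun p : ℝ × ℝ => ux p.1 p.2) := pd_contDiff hu
  have huxx : ContDiff ℝ (⊤ : ℕ∞) (fun p : ℝ × ℝ => uxx p.1 p.2) := pd_contDiff hux
  have hu_c : Continuous (fun p : ℝ × ℝ => u p.1 p.2) := hu.continuous
  have hux_c : Continuous (fun p : ℝ × ℝ => ux p.1 p.2) := hux.continuous
  have huxx_c : Continuous (fun p : ℝ × ℝ => uxx p.1 p.2) := huxx.continuous
  -- time derivative from the heat equation
  have hut : ∀ x t, HasDerivAt (fun τ => u x τ) (σ ^ 2 * uxx x t) t := by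
    intro x t
    have hdiff : DifferentiableAt ℝ (fun τ => u x τ) t :=
      ((hu.comp (contDiff_const.prodMk contDiff_id)).differentiable (by simp)).differentiableAt
    have h := hdiff.hasDerivAt
    have hh : deriv (fun τ => u x τ) t = σ ^ 2 * uxx x t := by
      rw [heat x t]; rfl
    rwa [hh] at h
  -- derivatives of exponentials
  have he_deriv : ∀ x : ℝ, HasDerivAt e (-I * k * e x) x := by
    intro x
    have h0 : HasDerivAt (fun x : ℝ => (x : ℂ)) 1 x := Complex.ofRealCLM.hasDerivAt
    have h1 : HasDerivAt (fun x : ℝ => -I * k * (x : ℂ)) (-I * k) x := by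
      simpa using h0.const_mul (-I * k)
    simpa [he, mul_comm] using h1.cexp
  have hEs_deriv : ∀ s : ℝ, HasDerivAt Es ((σ:ℂ)^2 * k^2 * Es s) s := by
    intro s
    have h0 : HasDerivAt (fun s : ℝ => (s : ℂ)) 1 s := Complex.ofRealCLM.hasDerivAt
    have h1 : HasDerivAt (fun s : ℝ => (σ:ℂ)^2 * k^2 * (s : ℂ)) ((σ:ℂ)^2 * k^2) s := by
      simpa using h0.const_mul ((σ:ℂ)^2 * k^2)
    simpa [hEs, mul_comm] using h1.cexp
  -- continuity helpers
  have ce : Continuous e := by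
    apply Complex.continuous_exp.comp; continuity
  have cEs : Continuous Es := by
    apply Complex.continuous_exp.comp; continuity
  have cuC : Continuous (fun p : ℝ × ℝ => ((u p.1 p.2 : ℝ) : ℂ)) := continuous_ofReal.comp hu_c
  have cuxC : Continuous (fun p : ℝ × ℝ => ((ux p.1 p.2 : ℝ) : ℂ)) := continuous_ofReal.comp hux_c
  have cuxxC : Continuous (fun p : ℝ × ℝ => ((uxx p.1 p.2 : ℝ) : ℂ)) :=
    continuous_ofReal.comp huxx_c
  -- FTC in time, for each fixed x
  have keyT : ∀ x : ℝ, Es T * (u x T : ℂ) - (u x 0 : ℂ)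
      = ∫ s in (0:ℝ)..T, (σ:ℂ)^2 * Es s * (k^2 * (u x s : ℂ) + (uxx x s : ℂ)) := by
    intro x
    have hcont : Continuous fun s => (σ:ℂ)^2 * Es s * (k^2 * (u x s : ℂ) + (uxx x s : ℂ)) := by
      apply (continuous_const.mul cEs).mul
      exact (continuous_const.mul (cuC.comp (continuous_const.prodMk continuous_id))).add
        (cuxxC.comp (continuous_const.prodMk continuous_id))
    have hder : ∀ s ∈ uIcc (0:ℝ) T, HasDerivAt (fun s => Es s * (u x s : ℂ))
        ((σ:ℂ)^2 * Es s * (k^2 * (u x s : ℂ) + (uxx x s : ℂ))) s := by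
      intro s _
      have h := (hEs_deriv s).mul ((hut x s).ofReal_comp)
      convert h using 1
      · rfl
      · rfl
      push_cast
      ring
    have h := intervalIntegral.integral_eq_sub_of_hasDerivAt hder
      (hcont.intervalIntegrable 0 T)
    rw [h]
    have : Es 0 = 1 := by simp [hEs]
    rw [this, one_mul]
  -- integration by parts in space over [R,0]
  have keyX : ∀ (s R : ℝ), (∫ x in R..(0:ℝ), e x * (k^2 * (u x s : ℂ) + (uxx x s : ℂ)))
      = ((ux 0 s : ℂ) + I * k * (u 0 s : ℂ)) - e R * ((ux R s : ℂ) + I * k * (u R s : ℂ)) := by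
    intro s R
    have hcont : Continuous fun x => e x * (k^2 * (u x s : ℂ) + (uxx x s : ℂ)) := by
      apply ce.mul
      exact (continuous_const.mul (cuC.comp (continuous_id.prodMk continuous_const))).add
        (cuxxC.comp (continuous_id.prodMk continuous_const))
    have hg : ∀ x ∈ uIcc R (0:ℝ), HasDerivAt
        (fun x => e x * ((ux x s : ℂ) + I * k * (u x s : ℂ)))
        (e x * (k^2 * (u x s : ℂ) + (uxx x s : ℂ))) x := by
      intro x _
      have h2 : HasDerivAt (fun x : ℝ => ((ux x s : ℂ) + I * k * (u x s : ℂ)))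
          ((uxx x s : ℂ) + I * k * (ux x s : ℂ)) x := by
        have ha := (pd_hasDerivAt hux x s).ofReal_comp
        have hb := ((pd_hasDerivAt hu x s).ofReal_comp).const_mul (I * k)
        exact ha.add hb
      have h := (he_deriv x).mul h2
      convert h using 1
      · rfl
      · rfl
      linear_combination (e x * k ^ 2 * ((u x s : ℝ) : ℂ)) * Complex.I_sq
    have h := intervalIntegral.integral_eq_sub_of_hasDerivAt hg (hcont.intervalIntegrable R 0)
    rw [h]
    have h0 : e 0 = 1 := by simp [he]
    rw [h0, one_mul]
  -- Fubini on the rectangle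
  have fub : ∀ R : ℝ, R ≤ 0 →
      (∫ x in R..(0:ℝ), ∫ s in (0:ℝ)..T,
          e x * ((σ:ℂ)^2 * Es s * (k^2 * (u x s : ℂ) + (uxx x s : ℂ))))
      = ∫ s in (0:ℝ)..T, ∫ x in R..(0:ℝ),
          e x * ((σ:ℂ)^2 * Es s * (k^2 * (u x s : ℂ) + (uxx x s : ℂ))) := by
    intro R hR
    have hFc : Continuous fun p : ℝ × ℝ =>
        e p.1 * ((σ:ℂ)^2 * Es p.2 * (k^2 * (u p.1 p.2 : ℂ) + (uxx p.1 p.2 : ℂ))) := by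
      exact (ce.comp continuous_fst).mul ((continuous_const.mul (cEs.comp continuous_snd)).mul
        ((continuous_const.mul cuC).add cuxxC))
    have hint : Integrable (Function.uncurry fun x s =>
        e x * ((σ:ℂ)^2 * Es s * (k^2 * (u x s : ℂ) + (uxx x s : ℂ))))
        ((volume.restrict (Ioc R 0)).prod (volume.restrict (Ioc (0:ℝ) T))) := by
      rw [Measure.prod_restrict, ← Measure.volume_eq_prod]
      have hcpt : IsCompact (Icc R 0 ×ˢ Icc (0:ℝ) T) := isCompact_Icc.prod isCompact_Icc
      have : IntegrableOn (fun p : ℝ × ℝ =>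
          e p.1 * ((σ:ℂ)^2 * Es p.2 * (k^2 * (u p.1 p.2 : ℂ) + (uxx p.1 p.2 : ℂ))))
          (Icc R 0 ×ˢ Icc (0:ℝ) T) := hFc.continuousOn.integrableOn_compact hcpt
      exact this.mono_set (Set.prod_mono Ioc_subset_Icc_self Ioc_subset_Icc_self)
    simp_rw [intervalIntegral.integral_of_le hR, intervalIntegral.integral_of_le hT.le]
    exact MeasureTheory.integral_integral_swap hint
  -- continuity of boundary integrands in s
  have cP : Continuous fun s => (σ:ℂ)^2 * Es s * ((ux 0 s : ℂ) + I * k * (u 0 s : ℂ)) := by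
    exact (continuous_const.mul cEs).mul
      ((cuxC.comp (continuous_const.prodMk continuous_id)).add
        (continuous_const.mul (cuC.comp (continuous_const.prodMk continuous_id))))
  have cQ : ∀ R : ℝ, Continuous fun s =>
      (σ:ℂ)^2 * Es s * (e R * ((ux R s : ℂ) + I * k * (u R s : ℂ))) := by
    intro R
    exact (continuous_const.mul cEs).mul (continuous_const.mul
      ((cuxC.comp (continuous_const.prodMk continuous_id)).add
        (continuous_const.mul (cuC.comp (continuous_const.prodMk continuous_id)))))
  -- the finite-rectangle global relation
  have key : ∀ R : ℝ, R ≤ 0 →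
      (∫ x in R..(0:ℝ), e x * (u x 0 : ℂ)) - (∫ x in R..(0:ℝ), e x * Es T * (u x T : ℂ))
        + (∫ s in (0:ℝ)..T, (σ:ℂ)^2 * Es s * ((ux 0 s : ℂ) + I * k * (u 0 s : ℂ)))
      = ∫ s in (0:ℝ)..T, (σ:ℂ)^2 * Es s * (e R * ((ux R s : ℂ) + I * k * (u R s : ℂ))) := by
    intro R hR
    have c1 : Continuous fun x => e x * Es T * (u x T : ℂ) :=
      (ce.mul continuous_const).mul (cuC.comp (continuous_id.prodMk continuous_const))
    have c0 : Continuous fun x => e x * (u x 0 : ℂ) :=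
      ce.mul (cuC.comp (continuous_id.prodMk continuous_const))
    have h1 : (∫ x in R..(0:ℝ), e x * Es T * (u x T : ℂ))
          - (∫ x in R..(0:ℝ), e x * (u x 0 : ℂ))
        = ∫ x in R..(0:ℝ), (e x * Es T * (u x T : ℂ) - e x * (u x 0 : ℂ)) :=
      (intervalIntegral.integral_sub (c1.intervalIntegrable _ _)
        (c0.intervalIntegrable _ _)).symm
    have h2 : ∀ x : ℝ, e x * Es T * (u x T : ℂ) - e x * (u x 0 : ℂ)
        = ∫ s in (0:ℝ)..T, e x * ((σ:ℂ)^2 * Es s * (k^2 * (u x s : ℂ) + (uxx x s : ℂ))) := by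
      intro x
      rw [intervalIntegral.integral_const_mul, ← keyT x]
      ring
    have h3 : (∫ x in R..(0:ℝ), e x * Es T * (u x T : ℂ))
          - (∫ x in R..(0:ℝ), e x * (u x 0 : ℂ))
        = ∫ s in (0:ℝ)..T, (σ:ℂ)^2 * Es s *
            (((ux 0 s : ℂ) + I * k * (u 0 s : ℂ))
              - e R * ((ux R s : ℂ) + I * k * (u R s : ℂ))) := by
      rw [h1]
      simp_rw [h2]
      rw [fub R hR]
      apply intervalIntegral.integral_congr
      intro s _
      have hre : ∀ x : ℝ, e x * ((σ:ℂ)^2 * Es s * (k^2 * (u x s : ℂ) + (uxx x s : ℂ)))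
          = (σ:ℂ)^2 * Es s * (e x * (k^2 * (u x s : ℂ) + (uxx x s : ℂ))) := fun x => by ring
      simp_rw [hre]
      rw [intervalIntegral.integral_const_mul, keyX s R]
    have h4 : (∫ s in (0:ℝ)..T, (σ:ℂ)^2 * Es s *
            (((ux 0 s : ℂ) + I * k * (u 0 s : ℂ))
              - e R * ((ux R s : ℂ) + I * k * (u R s : ℂ))))
        = (∫ s in (0:ℝ)..T, (σ:ℂ)^2 * Es s * ((ux 0 s : ℂ) + I * k * (u 0 s : ℂ)))
          - ∫ s in (0:ℝ)..T, (σ:ℂ)^2 * Es s *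
              (e R * ((ux R s : ℂ) + I * k * (u R s : ℂ))) := by
      simp_rw [mul_sub]
      exact intervalIntegral.integral_sub (cP.intervalIntegrable _ _)
        ((cQ R).intervalIntegrable _ _)
    rw [h4] at h3
    linear_combination -h3
  -- norm of e
  have hnorm_e : ∀ x : ℝ, ‖e x‖ = Real.exp (k.im * x) := by
    intro x
    rw [he]
    rw [Complex.norm_exp]
    congr 1
    have : (-I * k * (x:ℂ)).re = k.im * x := by
      simp [Complex.mul_re, Complex.mul_im]
    rw [this]
  -- integrability on Iic 0
  have int_u : ∀ t : ℝ, 0 ≤ t → t ≤ T →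
      IntegrableOn (fun x => e x * (u x t : ℂ)) (Iic (0:ℝ)) := by
    intro t ht0 htT
    apply Integrable.mono' (((myIntegrableOn_exp_mul_Iic hk 0)).const_mul C)
    · exact (ce.mul (cuC.comp (continuous_id.prodMk continuous_const))).aestronglyMeasurable
    · filter_upwards [ae_restrict_mem measurableSet_Iic] with x hx
      rw [norm_mul, hnorm_e]
      have h1 := (hdecay x t hx ht0 htT).1
      have h2 : ‖((u x t : ℝ) : ℂ)‖ = |u x t| := by
        rw [Complex.norm_real, Real.norm_eq_abs]
      rw [h2]
      have hx' : x ≤ (0:ℝ) := hx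
      have h3 : Real.exp (α * x) ≤ 1 := by
        rw [← Real.exp_zero]
        apply Real.exp_le_exp.2
        nlinarith [mul_nonneg hα.le (neg_nonneg.2 hx')]
      have h4 : (0:ℝ) < Real.exp (k.im * x) := Real.exp_pos _
      calc Real.exp (k.im * x) * |u x t| ≤ Real.exp (k.im * x) * (C * Real.exp (α * x)) := by
            exact mul_le_mul_of_nonneg_left h1 h4.le
        _ = (C * Real.exp (k.im * x)) * Real.exp (α * x) := by ring
        _ ≤ C * Real.exp (k.im * x) := mul_le_of_le_one_right (by positivity) h3
  -- limits of the two space integrals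
  have lim1 : Tendsto (fun R : ℝ => ∫ x in R..(0:ℝ), e x * (u x 0 : ℂ)) atBot
      (𝓝 (∫ x in Iic (0:ℝ), e x * (u x 0 : ℂ))) :=
    intervalIntegral_tendsto_integral_Iic 0 (int_u 0 le_rfl hT.le) tendsto_id
  have intT : IntegrableOn (fun x => e x * Es T * (u x T : ℂ)) (Iic (0:ℝ)) := by
    have h := (int_u T hT.le le_rfl).const_mul (Es T)
    have hfe : (fun x => e x * Es T * (u x T : ℂ)) = fun x => Es T * (e x * (u x T : ℂ)) := by
      funext x; ring
    rw [hfe]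
    exact h
  have lim2 : Tendsto (fun R : ℝ => ∫ x in R..(0:ℝ), e x * Es T * (u x T : ℂ)) atBot
      (𝓝 (∫ x in Iic (0:ℝ), e x * Es T * (u x T : ℂ))) :=
    intervalIntegral_tendsto_integral_Iic 0 intT tendsto_id
  -- the boundary term tends to 0
  set ME : ℝ := Real.exp (σ^2 * |(k^2).re| * T) with hME
  set K : ℝ := σ^2 * ME * ((1 + ‖k‖) * C) with hK
  have hEs_bound : ∀ s ∈ Set.Ioc (0:ℝ) T, ‖Es s‖ ≤ ME := by
    intro s hs
    rw [hEs]
    rw [Complex.norm_exp]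
    apply Real.exp_le_exp.2
    have h1 : ((σ:ℂ)^2 * k^2 * (s:ℂ)).re = σ^2 * (k^2).re * s := by
      have h0 : ((σ:ℂ)^2 * k^2 * (s:ℂ)) = (((σ^2 : ℝ) : ℂ)) * k^2 * ((s:ℝ):ℂ) := by
        push_cast; ring
      rw [h0]
      simp only [Complex.mul_re, Complex.mul_im, Complex.ofReal_re, Complex.ofReal_im]
      ring
    rw [h1]
    have hs0 : 0 ≤ s := hs.1.le
    have hsT : s ≤ T := hs.2
    have : σ^2 * (k^2).re * s ≤ σ^2 * |(k^2).re| * s := by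
      apply mul_le_mul_of_nonneg_right _ hs0
      exact mul_le_mul_of_nonneg_left (le_abs_self _) (sq_nonneg σ)
    calc σ^2 * (k^2).re * s ≤ σ^2 * |(k^2).re| * s := this
      _ ≤ σ^2 * |(k^2).re| * T := by
          apply mul_le_mul_of_nonneg_left hsT (by positivity)
  have lim3 : Tendsto (fun R : ℝ => ∫ s in (0:ℝ)..T,
      (σ:ℂ)^2 * Es s * (e R * ((ux R s : ℂ) + I * k * (u R s : ℂ)))) atBot (𝓝 0) := by
    apply squeeze_zero_norm' (a := fun R : ℝ => K * Real.exp ((k.im + α) * R) * |T - 0|)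
    · filter_upwards [eventually_le_atBot (0:ℝ)] with R hR
      apply intervalIntegral.norm_integral_le_of_norm_le_const
      intro s hs
      rw [Set.uIoc_of_le hT.le] at hs
      have hd := hdecay R s hR hs.1.le hs.2
      have hb1 : ‖((ux R s : ℝ) : ℂ) + I * k * ((u R s : ℝ) : ℂ)‖
          ≤ (1 + ‖k‖) * (C * Real.exp (α * R)) := by
        calc ‖((ux R s : ℝ) : ℂ) + I * k * ((u R s : ℝ) : ℂ)‖
            ≤ ‖((ux R s : ℝ) : ℂ)‖ + ‖I * k * ((u R s : ℝ) : ℂ)‖ := norm_add_le _ _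
          _ = |ux R s| + ‖k‖ * |u R s| := by
              simp [Complex.norm_real, Real.norm_eq_abs, norm_mul]
          _ ≤ C * Real.exp (α * R) + ‖k‖ * (C * Real.exp (α * R)) := by
              have hk0 : (0:ℝ) ≤ ‖k‖ := norm_nonneg k
              have h2 : |ux R s| ≤ C * Real.exp (α * R) := hd.2
              have h1 : |u R s| ≤ C * Real.exp (α * R) := hd.1
              exact add_le_add h2 (mul_le_mul_of_nonneg_left h1 hk0)
          _ = (1 + ‖k‖) * (C * Real.exp (α * R)) := by ring
      calc ‖(σ:ℂ)^2 * Es s * (e R * (((ux R s : ℝ) : ℂ) + I * k * ((u R s : ℝ) : ℂ)))‖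
          = σ^2 * ‖Es s‖ * (Real.exp (k.im * R)
              * ‖((ux R s : ℝ) : ℂ) + I * k * ((u R s : ℝ) : ℂ)‖) := by
            rw [norm_mul, norm_mul, norm_mul, hnorm_e]
            congr 2
            rw [norm_pow]
            simp [Complex.norm_real, Real.norm_eq_abs, _root_.sq_abs]
        _ ≤ σ^2 * ME * (Real.exp (k.im * R) * ((1 + ‖k‖) * (C * Real.exp (α * R)))) := by
            exact mul_le_mul (mul_le_mul_of_nonneg_left (hEs_bound s hs) (sq_nonneg σ))
              (mul_le_mul_of_nonneg_left hb1 (Real.exp_pos _).le)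
              (by positivity) (by positivity)
        _ = K * Real.exp ((k.im + α) * R) := by
            rw [hK]
            rw [show Real.exp ((k.im + α) * R) = Real.exp (k.im * R) * Real.exp (α * R) by
              rw [← Real.exp_add]; ring_nf]
            ring
    · have hexp : Tendsto (fun R : ℝ => Real.exp ((k.im + α) * R)) atBot (𝓝 0) := by
        apply Real.tendsto_exp_atBot.comp
        exact Tendsto.const_mul_atBot (by positivity) tendsto_id
      have := (hexp.const_mul K).mul_const |T - 0|
      simpa using this
  -- put everything together
  have hLHS : Tendsto (fun R : ℝ =>
      (∫ x in R..(0:ℝ), e x * (u x 0 : ℂ)) - (∫ x in R..(0:ℝ), e x * Es T * (u x T : ℂ))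
        + (∫ s in (0:ℝ)..T, (σ:ℂ)^2 * Es s * ((ux 0 s : ℂ) + I * k * (u 0 s : ℂ)))) atBot
      (𝓝 ((∫ x in Iic (0:ℝ), e x * (u x 0 : ℂ)) - (∫ x in Iic (0:ℝ), e x * Es T * (u x T : ℂ))
        + (∫ s in (0:ℝ)..T, (σ:ℂ)^2 * Es s * ((ux 0 s : ℂ) + I * k * (u 0 s : ℂ))))) :=
    (lim1.sub lim2).add tendsto_const_nhds
  have hLHS0 : Tendsto (fun R : ℝ =>
      (∫ x in R..(0:ℝ), e x * (u x 0 : ℂ)) - (∫ x in R..(0:ℝ), e x * Es T * (u x T : ℂ))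
        + (∫ s in (0:ℝ)..T, (σ:ℂ)^2 * Es s * ((ux 0 s : ℂ) + I * k * (u 0 s : ℂ)))) atBot
      (𝓝 0) := by
    apply Tendsto.congr' _ lim3
    filter_upwards [eventually_le_atBot (0:ℝ)] with R hR
    exact (key R hR).symm
  have hfinal : (∫ x in Iic (0:ℝ), e x * (u x 0 : ℂ))
      - (∫ x in Iic (0:ℝ), e x * Es T * (u x T : ℂ))
      + (∫ s in (0:ℝ)..T, (σ:ℂ)^2 * Es s * ((ux 0 s : ℂ) + I * k * (u 0 s : ℂ))) = 0 :=
    tendsto_nhds_unique hLHS hLHS0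
  -- identify with the statement
  have e2 : ∀ x : ℝ, Complex.exp (-I * k * (x:ℂ) + (σ:ℂ)^2 * k^2 * (T:ℂ)) * (u x T : ℂ)
      = e x * Es T * (u x T : ℂ) := by
    intro x
    rw [Complex.exp_add]
  have g2 : (∫ x in Iic (0:ℝ),
        Complex.exp (-I * k * (x:ℂ) + (σ:ℂ)^2 * k^2 * (T:ℂ)) * (u x T : ℂ))
      = ∫ x in Iic (0:ℝ), e x * Es T * (u x T : ℂ) := by
    apply MeasureTheory.integral_congr_ae
    filter_upwards with x using e2 x
  have e3 : ∀ s : ℝ, deriv (fun ξ : ℝ => ((u ξ s : ℝ) : ℂ)) 0 = ((ux 0 s : ℝ) : ℂ) := fun s =>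
    ((pd_hasDerivAt hu 0 s).ofReal_comp).deriv
  simp_rw [e3]
  rw [g2]
  exact hfinal.symm
end

section
/- Let n ≥ 1, σ₁,…,σ_{n+1} > 0 and x₁ < … < x_n. Let A(κ) be the 2n×2n matrix of the infinite-domain n-interface system described below. Then A factors as A(κ) = A^L(κ) A^M(κ) where A^L(κ) is the diagonal matrix diag(e^{−iκx₁/σ₁},…,e^{−iκx_n/σ_n}, e^{iκx₁/σ₂},…,e^{iκx_n/σ_{n+1}}), and every entry of A^M(κ) is of the form c κ^a e^{iκ b} with a ∈ {0,1}, c ∈ ℂ constant, and b ≥ 0 a real constant depending on the entry (so that e^{iκb} is bounded for Im κ ≥ 0). Consequently |det A^M(κ)| = O(|κ|^{2n}) as |κ| → ∞ in the closed upper half plane. -/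
open Complex Matrix

/-- The `2n × 2n` coefficient matrix `A(κ)` of the global-relation system for the heat
equation on `ℝ` with `n` interfaces at `x 0 < … < x (n-1)` and conductivities `(σ j)²`
on the `j`-th layer (`σ j`, `j : Fin (n+1)`, is the paper's `σ_{j+1}`; `x j` is the
paper's `x_{j+1}`).  Rows `inl j` are the global relations of layers `1,…,n` evaluated
at `+κ`; rows `inr j` those of layers `2,…,n+1` evaluated at `−κ`; columns `inl`/`inr`
correspond to the unknowns `g₀⁽¹⁾,…,g₀⁽ⁿ⁾` / `g₁⁽¹⁾,…,g₁⁽ⁿ⁾`. -/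
noncomputable def interfaceMatrix (n : ℕ) (σ : Fin (n + 1) → ℝ) (x : Fin n → ℝ) (κ : ℂ) :
    Matrix (Fin n ⊕ Fin n) (Fin n ⊕ Fin n) ℂ :=
  fun i j =>
    match i, j with
    | .inl j, .inl l =>
        if l = j then (I * κ / (σ j.castSucc : ℝ)) *
          Complex.exp (-I * κ * (x j : ℝ) / (σ j.castSucc : ℝ))
        else if (l : ℕ) + 1 = (j : ℕ) then (-I * κ / (σ j.castSucc : ℝ)) *
          Complex.exp (-I * κ * (x l : ℝ) / (σ j.castSucc : ℝ))
        else 0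
    | .inl j, .inr l =>
        if l = j then Complex.exp (-I * κ * (x j : ℝ) / (σ j.castSucc : ℝ))
        else if (l : ℕ) + 1 = (j : ℕ) then
          (-((σ l.castSucc : ℝ) : ℂ) ^ 2 / ((σ j.castSucc : ℝ) : ℂ) ^ 2) *
            Complex.exp (-I * κ * (x l : ℝ) / (σ j.castSucc : ℝ))
        else 0
    | .inr j, .inl l =>
        if l = j then (I * κ / (σ j.succ : ℝ)) *
          Complex.exp (I * κ * (x j : ℝ) / (σ j.succ : ℝ))
        else if (j : ℕ) + 1 = (l : ℕ) then (-I * κ / (σ j.succ : ℝ)) *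
          Complex.exp (I * κ * (x l : ℝ) / (σ j.succ : ℝ))
        else 0
    | .inr j, .inr l =>
        if l = j then (-((σ j.castSucc : ℝ) : ℂ) ^ 2 / ((σ j.succ : ℝ) : ℂ) ^ 2) *
          Complex.exp (I * κ * (x j : ℝ) / (σ j.succ : ℝ))
        else if (j : ℕ) + 1 = (l : ℕ) then
          Complex.exp (I * κ * (x l : ℝ) / (σ j.succ : ℝ))
        else 0

/-- The diagonal matrix `A^L(κ) = diag(e^{−iκx₁/σ₁},…,e^{−iκxₙ/σₙ},
e^{iκx₁/σ₂},…,e^{iκxₙ/σ_{n+1}})`. -/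
noncomputable def interfaceMatrixL (n : ℕ) (σ : Fin (n + 1) → ℝ) (x : Fin n → ℝ) (κ : ℂ) :
    Matrix (Fin n ⊕ Fin n) (Fin n ⊕ Fin n) ℂ :=
  Matrix.diagonal (Sum.elim
    (fun j : Fin n => Complex.exp (-I * κ * (x j : ℝ) / (σ j.castSucc : ℝ)))
    (fun j : Fin n => Complex.exp (I * κ * (x j : ℝ) / (σ j.succ : ℝ))))

/-! Since `A^L(κ)` is diagonal with `A^L(κ)⁻¹ = A^L(−κ)`, the matrix `A^M(κ) = A^L(−κ) A(κ)`
multiplies each exponential of row `j` by the inverse of its diagonal exponential, producing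
phases `e^{iκ(x_j − x_l)/σ}` (upper rows, `l ≤ j`) and `e^{iκ(x_l − x_j)/σ}` (lower rows,
`l ≥ j`). The ordering of the interfaces makes every phase nonnegative, so each entry is
`c κ^a` times a factor of modulus at most `1` on the closed upper half plane, and the Leibniz
expansion bounds `det A^M(κ)` by `(2n)! (max |c| · |κ|)^{2n}` for `|κ| ≥ 1`. -/
theorem Matrix.exists_norm_det_le_mul_pow {ι α 𝕜 : Type*} [Fintype ι] [DecidableEq ι]
    [NormedField 𝕜] {M : α → Matrix ι ι 𝕜} {r : α → ℝ} {S : Set α}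
    (hr : ∀ t ∈ S, 0 ≤ r t) (hM : ∀ i j, ∃ C, ∀ t ∈ S, ‖M t i j‖ ≤ C * r t) :
    ∃ C, 0 < C ∧ ∀ t ∈ S, ‖(M t).det‖ ≤ C * r t ^ Fintype.card ι := by
  choose C hC using hM
  obtain ⟨K, hK⟩ := Finite.exists_le fun p : ι × ι => C p.1 p.2
  set K' := max K 1
  refine ⟨(Fintype.card ι).factorial * K' ^ Fintype.card ι, by positivity, fun t ht => ?_⟩
  have hentry : ∀ i j, ‖M t i j‖ ≤ K' * r t := fun i j =>
    (hC i j t ht).trans <| mul_le_mul_of_nonneg_right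
      ((hK (i, j)).trans (le_max_left _ _)) (hr t ht)
  calc ‖(M t).det‖ ≤ (Fintype.card ι).factorial • (K' * r t) ^ Fintype.card ι :=
        det_le (abv := IsAbsoluteValue.toAbsoluteValue norm) hentry
    _ = _ := by rw [nsmul_eq_mul, mul_pow, mul_assoc]

theorem Complex.norm_exp_I_mul_ofReal_le_one {κ : ℂ} (hκ : 0 ≤ κ.im) {b : ℝ} (hb : 0 ≤ b) :
    ‖exp (I * κ * b)‖ ≤ 1 := by
  rw [norm_exp, Real.exp_le_one_iff]
  simpa [mul_re, mul_im] using mul_nonneg hκ hb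

def IsExpMonomial (f : ℂ → ℂ) : Prop :=
  ∃ (c : ℂ) (a : ℕ) (b : ℝ), (a = 0 ∨ a = 1) ∧ 0 ≤ b ∧
    ∀ κ, f κ = c * κ ^ a * exp (I * κ * b)

namespace IsExpMonomial

theorem zero : IsExpMonomial fun _ => 0 :=
  ⟨0, 0, 0, Or.inl rfl, le_rfl, fun _ => by simp⟩

theorem congr {f g : ℂ → ℂ} (hf : IsExpMonomial f) (h : ∀ κ, f κ = g κ) : IsExpMonomial g :=
  funext h ▸ hf

theorem norm_le {f : ℂ → ℂ} (hf : IsExpMonomial f) :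
    ∃ C, ∀ κ : ℂ, 0 ≤ κ.im → 1 ≤ ‖κ‖ → ‖f κ‖ ≤ C * ‖κ‖ := by
  obtain ⟨c, a, b, ha, hb, hf⟩ := hf
  refine ⟨‖c‖, fun κ hκ h1 => ?_⟩
  have hpow : ‖κ ^ a‖ ≤ ‖κ‖ := by
    rcases ha with rfl | rfl <;> simp [h1]
  calc ‖f κ‖ = ‖c‖ * ‖κ ^ a‖ * ‖exp (I * κ * b)‖ := by rw [hf, norm_mul, norm_mul]
    _ ≤ ‖c‖ * ‖κ‖ * 1 := by
        gcongr
        exact norm_exp_I_mul_ofReal_le_one hκ hb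
    _ = ‖c‖ * ‖κ‖ := mul_one _

end IsExpMonomial

theorem Complex.exp_I_mul_div_mul_exp_neg_I_mul_div (κ : ℂ) (s t σ : ℝ) :
    exp (I * κ * t / σ) * exp (-I * κ * s / σ) = exp (I * κ * ((t - s) / σ : ℝ)) := by
  rw [← exp_add]; push_cast; ring_nf

theorem isExpMonomial_exp_mul_exp_neg_I_mul_div (c : ℂ) {a : ℕ} (ha : a = 0 ∨ a = 1)
    {s t σ : ℝ} (hst : s ≤ t) (hσ : 0 ≤ σ) :
    IsExpMonomial fun κ => exp (-I * -κ * t / σ) * (c * κ ^ a * exp (-I * κ * s / σ)) :=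
  ⟨c, a, (t - s) / σ, ha, div_nonneg (sub_nonneg.2 hst) hσ, fun κ => by
    rw [← Complex.exp_I_mul_div_mul_exp_neg_I_mul_div]; ring_nf⟩

theorem isExpMonomial_exp_mul_exp_I_mul_div (c : ℂ) {a : ℕ} (ha : a = 0 ∨ a = 1)
    {s t σ : ℝ} (hst : s ≤ t) (hσ : 0 ≤ σ) :
    IsExpMonomial fun κ => exp (I * -κ * s / σ) * (c * κ ^ a * exp (I * κ * t / σ)) :=
  ⟨c, a, (t - s) / σ, ha, div_nonneg (sub_nonneg.2 hst) hσ, fun κ => by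
    rw [← Complex.exp_I_mul_div_mul_exp_neg_I_mul_div]; ring_nf⟩

theorem interfaceMatrixL_mul_interfaceMatrixL_neg (n : ℕ) (σ : Fin (n + 1) → ℝ)
    (x : Fin n → ℝ) (κ : ℂ) :
    interfaceMatrixL n σ x κ * interfaceMatrixL n σ x (-κ) = 1 := by
  rw [interfaceMatrixL, interfaceMatrixL, diagonal_mul_diagonal, ← diagonal_one]
  congr 1
  ext (j | j) <;> simp [← exp_add, neg_div]

noncomputable def interfaceMatrixM (n : ℕ) (σ : Fin (n + 1) → ℝ) (x : Fin n → ℝ) (κ : ℂ) :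
    Matrix (Fin n ⊕ Fin n) (Fin n ⊕ Fin n) ℂ :=
  interfaceMatrixL n σ x (-κ) * interfaceMatrix n σ x κ

theorem interfaceMatrix_eq_interfaceMatrixL_mul_interfaceMatrixM (n : ℕ) (σ : Fin (n + 1) → ℝ)
    (x : Fin n → ℝ) (κ : ℂ) :
    interfaceMatrix n σ x κ = interfaceMatrixL n σ x κ * interfaceMatrixM n σ x κ := by
  rw [interfaceMatrixM, ← Matrix.mul_assoc, interfaceMatrixL_mul_interfaceMatrixL_neg,
    Matrix.one_mul]

theorem isExpMonomial_interfaceMatrixM_apply {n : ℕ} {σ : Fin (n + 1) → ℝ} (hσ : ∀ j, 0 ≤ σ j)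
    {x : Fin n → ℝ} (hx : Monotone x) (i j : Fin n ⊕ Fin n) :
    IsExpMonomial fun κ => interfaceMatrixM n σ x κ i j := by
  rcases i with r | r <;> rcases j with l | l <;>
    simp only [interfaceMatrixM, interfaceMatrixL, diagonal_mul, Sum.elim_inl, Sum.elim_inr,
      interfaceMatrix] <;>
    split_ifs with h₁ h₂
  · subst h₁
    exact (isExpMonomial_exp_mul_exp_neg_I_mul_div (I / σ l.castSucc) (Or.inr rfl) le_rfl
      (hσ _)).congr fun κ => by ring
  · exact (isExpMonomial_exp_mul_exp_neg_I_mul_div (-I / σ r.castSucc) (Or.inr rfl)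
      (hx (show l ≤ r by omega)) (hσ _)).congr fun κ => by ring
  · simpa using IsExpMonomial.zero
  · subst h₁
    exact (isExpMonomial_exp_mul_exp_neg_I_mul_div 1 (Or.inl rfl) le_rfl (hσ _)).congr
      fun κ => by ring
  · exact (isExpMonomial_exp_mul_exp_neg_I_mul_div
      (-(σ l.castSucc : ℂ) ^ 2 / (σ r.castSucc : ℂ) ^ 2) (Or.inl rfl)
      (hx (show l ≤ r by omega)) (hσ _)).congr fun κ => by ring
  · simpa using IsExpMonomial.zero
  · subst h₁
    exact (isExpMonomial_exp_mul_exp_I_mul_div (I / σ l.succ) (Or.inr rfl) le_rfl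
      (hσ _)).congr fun κ => by ring
  · exact (isExpMonomial_exp_mul_exp_I_mul_div (-I / σ r.succ) (Or.inr rfl)
      (hx (show r ≤ l by omega)) (hσ _)).congr fun κ => by ring
  · simpa using IsExpMonomial.zero
  · subst h₁
    exact (isExpMonomial_exp_mul_exp_I_mul_div (-(σ l.castSucc : ℂ) ^ 2 / (σ l.succ : ℂ) ^ 2)
      (Or.inl rfl) le_rfl (hσ _)).congr fun κ => by ring
  · exact (isExpMonomial_exp_mul_exp_I_mul_div 1 (Or.inl rfl) (hx (show r ≤ l by omega))
      (hσ _)).congr fun κ => by ring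
  · simpa using IsExpMonomial.zero

theorem interfaceMatrix_factorization_general
    (n : ℕ) (σ : Fin (n + 1) → ℝ) (hσ : ∀ j, 0 < σ j)
    (x : Fin n → ℝ) (hx : StrictMono x) :
    ∃ AM : ℂ → Matrix (Fin n ⊕ Fin n) (Fin n ⊕ Fin n) ℂ,
      (∀ κ, interfaceMatrix n σ x κ = interfaceMatrixL n σ x κ * AM κ) ∧
      (∀ i j : Fin n ⊕ Fin n, ∃ (c : ℂ) (a : ℕ) (b : ℝ), (a = 0 ∨ a = 1) ∧ 0 ≤ b ∧
        ∀ κ, AM κ i j = c * κ ^ a * Complex.exp (I * κ * (b : ℂ))) ∧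
      (∃ C R : ℝ, 0 < C ∧ ∀ κ : ℂ, 0 ≤ κ.im → R ≤ ‖κ‖ →
        ‖(AM κ).det‖ ≤ C * ‖κ‖ ^ (2 * n)) := by
  have hM := isExpMonomial_interfaceMatrixM_apply (fun j => (hσ j).le) hx.monotone
  refine ⟨interfaceMatrixM n σ x,
    interfaceMatrix_eq_interfaceMatrixL_mul_interfaceMatrixM n σ x, hM, ?_⟩
  obtain ⟨C, hC, hdet⟩ := Matrix.exists_norm_det_le_mul_pow (M := interfaceMatrixM n σ x)
    (S := {κ | 0 ≤ κ.im ∧ 1 ≤ ‖κ‖}) (fun κ _ => norm_nonneg κ) fun i j =>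
      (hM i j).norm_le.imp fun _ h κ hκ => h κ hκ.1 hκ.2
  refine ⟨C, 1, hC, fun κ him hκ => ?_⟩
  simpa [Fintype.card_sum, two_mul] using hdet κ ⟨him, hκ⟩

/-- Structural factorization `A(κ) = A^L(κ) A^M(κ)` of the `n`-interface matrix:
every entry of `A^M(κ)` has the form `c κ^a e^{iκb}` with `a ∈ {0,1}`, `c ∈ ℂ`
constant, and `b ≥ 0` real (so `e^{iκb}` is bounded for `Im κ ≥ 0`); consequently
`|det A^M(κ)| = O(|κ|^{2n})` as `|κ| → ∞` in the closed upper half plane. -/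
theorem interfaceMatrix_factorization
    (n : ℕ) (hn : 1 ≤ n) (σ : Fin (n + 1) → ℝ) (hσ : ∀ j, 0 < σ j)
    (x : Fin n → ℝ) (hx : StrictMono x) :
    ∃ AM : ℂ → Matrix (Fin n ⊕ Fin n) (Fin n ⊕ Fin n) ℂ,
      (∀ κ, interfaceMatrix n σ x κ = interfaceMatrixL n σ x κ * AM κ) ∧
      (∀ i j : Fin n ⊕ Fin n, ∃ (c : ℂ) (a : ℕ) (b : ℝ), (a = 0 ∨ a = 1) ∧ 0 ≤ b ∧
        ∀ κ, AM κ i j = c * κ ^ a * Complex.exp (I * κ * (b : ℂ))) ∧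
      (∃ C R : ℝ, 0 < C ∧ ∀ κ : ℂ, 0 ≤ κ.im → R ≤ ‖κ‖ →
        ‖(AM κ).det‖ ≤ C * ‖κ‖ ^ (2 * n)) :=
  interfaceMatrix_factorization_general n σ hσ x hx
end
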